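/- Let f be a C¹ quaternionic function on an open set Ω ⊆ H disjoint from the real axis. Then f is left-Cullen-regular on Ω if and only if D_l(ιf) + ι D_l f = −2f/r on Ω, where D_l is the left-Fueter operator and r = |Im p|. -/

import Mathlib

/-! Write `D_l = ∑ eₐ ∂ₐ` with `e₀ = 1`. By the Leibniz rule
`D_l(ιf) = (D_l ι) f + ∑ eₐ ι ∂ₐf`, and a direct computation gives `D_l ι = -2/r`
(`-3/r` from the numerator `Im p`, `+1/r` from the denominator `r`). For the imaginary units
`eₐ ι + ι eₐ = -2ιₐ`, so `∑ eₐ ι ∂ₐf + ι D_l f = 2ι ∂_t f - 2 ∂_r f = 2ι (∂_t + ι∂_r) f`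
because `ι² = -1`. Hence `D_l(ιf) + ι D_l f + 2f/r = 2ι · (∂_t + ι∂_r) f`, and `ι` is invertible. -/

/-- The quaternion unit `i`. -/
noncomputable def qI : Quaternion ℝ := ⟨0, 1, 0, 0⟩

/-- The quaternion unit `j`. -/
noncomputable def qJ : Quaternion ℝ := ⟨0, 0, 1, 0⟩

/-- The quaternion unit `k`. -/
noncomputable def qK : Quaternion ℝ := ⟨0, 0, 0, 1⟩

/-- The unit imaginary part `ι(p) = Im p / ‖Im p‖`. -/
noncomputable def iotaOf (p : Quaternion ℝ) : Quaternion ℝ := (‖p.im‖)⁻¹ • p.im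

/-- The left-Fueter operator `D_l = ∂/∂t + i ∂/∂x + j ∂/∂y + k ∂/∂z`. -/
noncomputable def fueterL (f : Quaternion ℝ → Quaternion ℝ) (p : Quaternion ℝ) :
    Quaternion ℝ :=
  fderiv ℝ f p 1 + qI * fderiv ℝ f p qI
    + qJ * fderiv ℝ f p qJ
    + qK * fderiv ℝ f p qK

/-- The Cullen operator `∂/∂t + ι ∂/∂r` in the slice coordinates `p = t + rι`. -/
noncomputable def cullenOp (f : Quaternion ℝ → Quaternion ℝ) (p : Quaternion ℝ) :
    Quaternion ℝ :=
  fderiv ℝ f p 1 + iotaOf p * fderiv ℝ f p (iotaOf p)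

/-- The angular operator `∂/∂ι`, defined off the real axis via the
decomposition `D_l = ∂/∂t + ι ∂/∂r − (1/r) ∂/∂ι`. -/
noncomputable def angularOp (f : Quaternion ℝ → Quaternion ℝ) (p : Quaternion ℝ) :
    Quaternion ℝ :=
  ‖p.im‖ • (cullenOp f p - fueterL f p)
open Quaternion

@[simp] lemma re_qI : qI.re = 0 := rfl
@[simp] lemma imI_qI : qI.imI = 1 := rfl
@[simp] lemma imJ_qI : qI.imJ = 0 := rfl
@[simp] lemma imK_qI : qI.imK = 0 := rfl
@[simp] lemma re_qJ : qJ.re = 0 := rfl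
@[simp] lemma imI_qJ : qJ.imI = 0 := rfl
@[simp] lemma imJ_qJ : qJ.imJ = 1 := rfl
@[simp] lemma imK_qJ : qJ.imK = 0 := rfl
@[simp] lemma re_qK : qK.re = 0 := rfl
@[simp] lemma imI_qK : qK.imI = 0 := rfl
@[simp] lemma imJ_qK : qK.imJ = 0 := rfl
@[simp] lemma imK_qK : qK.imK = 1 := rfl

noncomputable def Quaternion.imCLM : ℍ →L[ℝ] ℍ where
  toFun := im
  map_add' := im_add
  map_smul' _ _ := im_smul _ _
  cont := continuous_im

@[simp] lemma Quaternion.imCLM_apply (q : ℍ) : imCLM q = q.im := rfl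

lemma hasFDerivAt_norm_im {p : ℍ} (hp : p.im ≠ 0) :
    HasFDerivAt (fun q : ℍ => ‖q.im‖) (‖p.im‖⁻¹ • (innerSL ℝ p.im).comp imCLM) p := by
  have h := (imCLM.hasFDerivAt.norm_sq (x := p)).sqrt (by simpa using hp)
  simp only [imCLM_apply, Real.sqrt_sq (norm_nonneg _)] at h
  refine h.congr_fderiv ?_
  ext v
  simp only [smul_apply, ContinuousLinearMap.comp_apply, coe_innerSL_apply, nsmul_eq_mul,
    Nat.cast_ofNat, smul_eq_mul]
  field_simp

lemma hasFDerivAt_iotaOf {p : ℍ} (hp : p.im ≠ 0) :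
    HasFDerivAt iotaOf (‖p.im‖⁻¹ • imCLM
      - (‖p.im‖ ^ 3)⁻¹ • ((innerSL ℝ p.im).comp imCLM).smulRight p.im) p := by
  have h := ((hasDerivAt_inv (norm_ne_zero_iff.2 hp)).comp_hasFDerivAt p
    (hasFDerivAt_norm_im hp)).smul imCLM.hasFDerivAt
  refine h.congr_fderiv (ContinuousLinearMap.ext fun v => ?_)
  simp only [Function.comp_apply, neg_smul, imCLM_apply, add_apply, smul_apply, sub_apply,
    ContinuousLinearMap.smulRight_apply, neg_apply, ContinuousLinearMap.comp_apply,
    coe_innerSL_apply]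
  module

lemma norm_im_sq (p : ℍ) : ‖p.im‖ ^ 2 = p.imI ^ 2 + p.imJ ^ 2 + p.imK ^ 2 := by
  rw [sq, ← normSq_eq_norm_mul_self, normSq_def']; simp

lemma fueterL_iotaOf {p : ℍ} (hp : p.im ≠ 0) : fueterL iotaOf p = ((-2 / ‖p.im‖ : ℝ) : ℍ) := by
  have hr : ‖p.im‖ ≠ 0 := norm_ne_zero_iff.2 hp
  have h2 := norm_im_sq p
  simp only [fueterL, (hasFDerivAt_iotaOf hp).fderiv]
  ext <;> simp [re_mul, imI_mul, imJ_mul, imK_mul, inner_def, -coe_div] <;> field_simp <;>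
    first | ring1 | linear_combination -h2

lemma fueterL_mul {f g : ℍ → ℍ} {p : ℍ} (hg : DifferentiableAt ℝ g p)
    (hf : DifferentiableAt ℝ f p) :
    fueterL (fun q => g q * f q) p = fueterL g p * f p
      + (g p * fderiv ℝ f p 1 + qI * g p * fderiv ℝ f p qI + qJ * g p * fderiv ℝ f p qJ
        + qK * g p * fderiv ℝ f p qK) := by
  simp only [fueterL, fderiv_fun_mul' hg hf, add_apply, smul_apply, smul_eq_mul,
    MulOpposite.smul_eq_mul_unop, MulOpposite.unop_op]
  noncomm_ring

lemma eq_smul_qI_add_smul_qJ_add_smul_qK {u : ℍ} (hu : u.re = 0) :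
    u = u.imI • qI + u.imJ • qJ + u.imK • qK := by
  ext <;> simp [hu]

-- The cross terms pair up through the Clifford relation `eₐ u + u eₐ = -2 uₐ`.
lemma sum_unit_mul_add_mul_sum_unit (L : ℍ →L[ℝ] ℍ) {u : ℍ} (hu : u.re = 0) :
    u * L 1 + qI * u * L qI + qJ * u * L qJ + qK * u * L qK
      + u * (L 1 + qI * L qI + qJ * L qJ + qK * L qK) = (2 : ℝ) • (u * L 1 - L u) := by
  have hL : L u = u.imI • L qI + u.imJ • L qJ + u.imK • L qK := by
    conv_lhs => rw [eq_smul_qI_add_smul_qJ_add_smul_qK hu]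
    simp only [map_add, map_smul]
  rw [hL]
  generalize L 1 = w₀, L qI = w₁, L qJ = w₂, L qK = w₃
  ext <;> simp [re_mul, imI_mul, imJ_mul, imK_mul, hu] <;> ring

lemma re_iotaOf (p : ℍ) : (iotaOf p).re = 0 := by simp [iotaOf]

lemma iotaOf_ne_zero {p : ℍ} (hp : p.im ≠ 0) : iotaOf p ≠ 0 :=
  smul_ne_zero (inv_ne_zero (norm_ne_zero_iff.2 hp)) hp

lemma iotaOf_mul_self {p : ℍ} (hp : p.im ≠ 0) : iotaOf p * iotaOf p = -1 := by
  have hr : ‖p.im‖ ≠ 0 := norm_ne_zero_iff.2 hp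
  have hr1 : ‖p.im‖⁻¹ * ‖p.im‖⁻¹ * (‖p.im‖ * ‖p.im‖) = 1 := by field_simp
  rw [iotaOf, smul_mul_smul_comm, ← sq p.im, im_sq, normSq_eq_norm_mul_self, smul_neg,
    ← coe_mul_eq_smul, ← coe_mul, hr1, coe_one]

lemma fueterL_iotaOf_mul_add {f : ℍ → ℍ} {p : ℍ} (hp : p.im ≠ 0) (hf : DifferentiableAt ℝ f p) :
    fueterL (fun q => iotaOf q * f q) p + iotaOf p * fueterL f p
      = (-2 / ‖p.im‖) • f p + (2 : ℝ) • (iotaOf p * cullenOp f p) := by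
  rw [fueterL_mul (hasFDerivAt_iotaOf hp).differentiableAt hf, fueterL_iotaOf hp, add_assoc,
    fueterL, sum_unit_mul_add_mul_sum_unit _ (re_iotaOf p), coe_mul_eq_smul, cullenOp, mul_add,
    ← mul_assoc, iotaOf_mul_self hp, neg_one_mul, ← sub_eq_add_neg]

/-- For `f` of class `C¹` on an open set `Ω` off the real axis, `f` is
left-Cullen-regular on `Ω` iff `D_l(ι f) + ι D_l f = −2f/r` on `Ω`. -/
theorem cullenRegular_iff_fueter_identity
    (Ω : Set (Quaternion ℝ)) (hΩ : IsOpen Ω) (hax : ∀ p ∈ Ω, p.im ≠ 0)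
    (f : Quaternion ℝ → Quaternion ℝ) (hf : ContDiffOn ℝ 1 f Ω) :
    (∀ p ∈ Ω, cullenOp f p = 0) ↔
      ∀ p ∈ Ω, fueterL (fun q => iotaOf q * f q) p + iotaOf p * fueterL f p
        = (-2 / ‖p.im‖) • f p := by
  refine forall₂_congr fun p hp => ?_
  have hfp : DifferentiableAt ℝ f p :=
    (hf.contDiffAt (hΩ.mem_nhds hp)).differentiableAt one_ne_zero
  rw [fueterL_iotaOf_mul_add (hax p hp) hfp, add_eq_left, smul_eq_zero, mul_eq_zero]
  simp [iotaOf_ne_zero (hax p hp)]
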